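/- arXiv:2112.14598 — 3 statements merged into one kernel-verified Lean document; each statement's English description precedes it below -/
import Mathlib

section
/- Let k > 0, r > 0, L_R > 0 and θ, φ ∈ (−π/2, π/2) with cos θ · cos φ ≠ 0. Define the paraxial phase g(η_T, η_R) = η_T sin θ − η_R sin φ + (η_T cos θ − η_R cos φ)²/(2r), the kernel K(η_T', η_T) = ∫_{−L_R/2}^{L_R/2} exp(i k (g(η_T, η_R) − g(η_T', η_R))) dη_R, the focusing function F(η) = exp(i k (η sin θ + η² cos² θ/(2r))), and Ω = k L_R cos θ cos φ/(2r). Then for all η_T ≠ η_T': K(η_T', η_T) = F(η_T) · conj(F(η_T')) · (2r/(k cos θ cos φ)) · sin(Ω (η_T − η_T'))/(η_T − η_T'), and K(η_T, η_T) = L_R. In particular the kernel is, up to conjugation by the unimodular focusing function, a sinc kernel. -/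
/-- Under the paraxial approximation, the coupling kernel of two slanted linear apertures
is, up to conjugation by the unimodular focusing function `F`, a sinc kernel:
for `η_T ≠ η_T'`,
`K(η_T', η_T) = F(η_T) conj(F(η_T')) · (2r/(k cos θ cos φ)) · sin(Ω(η_T − η_T'))/(η_T − η_T')`,
and `K(η_T, η_T) = L_R`. -/
theorem paraxial_kernel_eq_sinc_kernel (k r LR θ φ : ℝ)
    (hk : 0 < k) (hr : 0 < r) (hLR : 0 < LR)
    (hθ : θ ∈ Set.Ioo (-(Real.pi / 2)) (Real.pi / 2))
    (hφ : φ ∈ Set.Ioo (-(Real.pi / 2)) (Real.pi / 2))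
    (hcos : Real.cos θ * Real.cos φ ≠ 0)
    (g : ℝ → ℝ → ℝ)
    (hg : ∀ ηT ηR, g ηT ηR = ηT * Real.sin θ - ηR * Real.sin φ +
      (ηT * Real.cos θ - ηR * Real.cos φ) ^ 2 / (2 * r))
    (K : ℝ → ℝ → ℂ)
    (hK : ∀ ηT' ηT, K ηT' ηT =
      ∫ ηR in (-(LR / 2))..(LR / 2),
        Complex.exp (Complex.I * (k : ℂ) * ((g ηT ηR - g ηT' ηR : ℝ) : ℂ)))
    (F : ℝ → ℂ)
    (hF : ∀ η, F η = Complex.exp (Complex.I * (k : ℂ) *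
      ((η * Real.sin θ + η ^ 2 * Real.cos θ ^ 2 / (2 * r) : ℝ) : ℂ)))
    (Ω : ℝ) (hΩ : Ω = k * LR * Real.cos θ * Real.cos φ / (2 * r)) :
    (∀ ηT ηT', ηT ≠ ηT' →
      K ηT' ηT = F ηT * star (F ηT') *
        ((2 * r / (k * Real.cos θ * Real.cos φ) *
          (Real.sin (Ω * (ηT - ηT')) / (ηT - ηT')) : ℝ) : ℂ)) ∧
    (∀ ηT, K ηT ηT = (LR : ℂ)) := by
  have hr' : (r : ℝ) ≠ 0 := hr.ne'
  have hk' : (k : ℝ) ≠ 0 := hk.ne'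
  have hkcc : k * Real.cos θ * Real.cos φ ≠ 0 := by
    intro h
    rcases mul_eq_zero.mp h with h1 | h1
    · rcases mul_eq_zero.mp h1 with h2 | h2
      · exact hk' h2
      · exact hcos (by rw [h2, zero_mul])
    · exact hcos (by rw [h1, mul_zero])
  constructor
  · intro ηT ηT' hne
    have hΔ : ηT - ηT' ≠ 0 := sub_ne_zero.mpr hne
    set Δ : ℝ := ηT - ηT' with hΔdef
    set s : ℝ := -(k * Real.cos θ * Real.cos φ * Δ / r) with hs
    have hs0 : s ≠ 0 := by
      simp only [hs, neg_ne_zero, div_ne_zero_iff]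
      exact ⟨mul_ne_zero hkcc hΔ, hr'⟩
    have hc0 : Complex.I * (s : ℂ) ≠ 0 :=
      mul_ne_zero Complex.I_ne_zero (Complex.ofReal_ne_zero.mpr hs0)
    -- exponent identity
    have key : ∀ ηR : ℝ, Complex.I * (k : ℂ) * ((g ηT ηR - g ηT' ηR : ℝ) : ℂ) =
        Complex.I * (k : ℂ) * ((ηT * Real.sin θ + ηT ^ 2 * Real.cos θ ^ 2 / (2 * r) : ℝ) : ℂ) +
        star (Complex.I * (k : ℂ) * ((ηT' * Real.sin θ + ηT' ^ 2 * Real.cos θ ^ 2 / (2 * r) : ℝ) : ℂ)) +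
        Complex.I * (s : ℂ) * (ηR : ℂ) := by
      intro ηR
      have hreal : k * (g ηT ηR - g ηT' ηR) =
          k * (ηT * Real.sin θ + ηT ^ 2 * Real.cos θ ^ 2 / (2 * r)) -
          k * (ηT' * Real.sin θ + ηT' ^ 2 * Real.cos θ ^ 2 / (2 * r)) + s * ηR := by
        rw [hg, hg, hs, hΔdef]
        field_simp
        ring
      have hstar : ∀ x : ℝ, star (Complex.I * (k : ℂ) * (x : ℂ)) =
          -(Complex.I * (k : ℂ) * (x : ℂ)) := by
        intro x
        rw [Complex.star_def, map_mul, map_mul, Complex.conj_I, Complex.conj_ofReal,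
          Complex.conj_ofReal]
        ring
      rw [hstar]
      have hpull : Complex.I * (k : ℂ) * ((g ηT ηR - g ηT' ηR : ℝ) : ℂ) =
          Complex.I * ((k * (g ηT ηR - g ηT' ηR) : ℝ) : ℂ) := by push_cast; ring
      rw [hpull, hreal]
      push_cast
      ring
    rw [hK]
    have hinteg : ∀ ηR : ℝ,
        Complex.exp (Complex.I * (k : ℂ) * ((g ηT ηR - g ηT' ηR : ℝ) : ℂ)) =
        F ηT * star (F ηT') * Complex.exp (Complex.I * (s : ℂ) * (ηR : ℂ)) := by
      intro ηR
      rw [key ηR, Complex.exp_add, Complex.exp_add, hF, hF]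
      congr 2
      rw [Complex.star_def, ← Complex.exp_conj]
    simp only [hinteg]
    rw [intervalIntegral.integral_const_mul]
    rw [show (∫ ηR in (-(LR / 2))..(LR / 2), Complex.exp (Complex.I * (s : ℂ) * (ηR : ℂ))) =
        (∫ ηR in (-(LR / 2))..(LR / 2), Complex.exp ((Complex.I * (s : ℂ)) * (ηR : ℂ))) from rfl,
      integral_exp_mul_complex hc0]
    congr 1
    -- the scalar computation
    have h1 : Complex.I * (s : ℂ) * ((LR / 2 : ℝ) : ℂ) = ((s * (LR / 2) : ℝ) : ℂ) * Complex.I := by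
      push_cast; ring
    have h2 : Complex.I * (s : ℂ) * ((-(LR / 2) : ℝ) : ℂ) =
        ((-(s * (LR / 2)) : ℝ) : ℂ) * Complex.I := by
      push_cast; ring
    have hdiff : Complex.exp (Complex.I * (s : ℂ) * ((LR / 2 : ℝ) : ℂ)) -
        Complex.exp (Complex.I * (s : ℂ) * ((-(LR / 2) : ℝ) : ℂ)) =
        ((2 * Real.sin (s * (LR / 2)) : ℝ) : ℂ) * Complex.I := by
      rw [h1, h2, Complex.exp_mul_I, Complex.exp_mul_I, ← Complex.ofReal_cos,
        ← Complex.ofReal_sin, ← Complex.ofReal_cos, ← Complex.ofReal_sin,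
        Real.cos_neg, Real.sin_neg]
      push_cast; ring
    rw [hdiff, div_eq_iff hc0]
    have hsin : Real.sin (s * (LR / 2)) = -Real.sin (Ω * Δ) := by
      have harg : s * (LR / 2) = -(Ω * Δ) := by
        rw [hs, hΩ]; field_simp
      rw [harg, Real.sin_neg]
    have hfin : 2 * Real.sin (s * (LR / 2)) =
        (2 * r / (k * Real.cos θ * Real.cos φ) * (Real.sin (Ω * Δ) / Δ)) * s := by
      rw [hsin, hs]
      field_simp
      have hc1 : Real.cos θ ≠ 0 := left_ne_zero_of_mul hcos
      have hc2 : Real.cos φ ≠ 0 := right_ne_zero_of_mul hcos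
      linear_combination (Real.sin (Ω * Δ) * (Real.cos φ * (Real.cos φ)⁻¹)) * mul_inv_cancel₀ hc1 + Real.sin (Ω * Δ) * mul_inv_cancel₀ hc2
    linear_combination (norm := (push_cast; ring)) Complex.I * congrArg Complex.ofReal hfin
  · intro ηT
    rw [hK]
    have hone : ∀ ηR : ℝ,
        Complex.exp (Complex.I * (k : ℂ) * ((g ηT ηR - g ηT ηR : ℝ) : ℂ)) = 1 := by
      intro ηR; simp
    simp only [hone]
    rw [intervalIntegral.integral_const]
    simp
end

section
/- Let k > 0, r > 0, L_T > 0, L_R > 0 and θ, φ ∈ (−π/2, π/2) with cos θ · cos φ ≠ 0. Define the focusing function F(η) = exp(i k (η sin θ + η² cos² θ/(2r))), Ω = k L_R cos θ cos φ/(2r), the kernel K(η_T', η_T) = ∫_{−L_R/2}^{L_R/2} exp(i k (g(η_T, η_R) − g(η_T', η_R))) dη_R with g(η_T, η_R) = η_T sin θ − η_R sin φ + (η_T cos θ − η_R cos φ)²/(2r). Let α : [−L_T/2, L_T/2] → ℂ be integrable, v ∈ ℂ, and set ψ(η) = F(η) α(η). Then ψ satisfies the eigenproblem v·ψ(η_T)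 = ∫_{−L_T/2}^{L_T/2} K(η_T', η_T) ψ(η_T') dη_T' for all η_T if and only if α satisfies the sinc-kernel eigenproblem v·α(η_T) = (2r/(k cos θ cos φ)) ∫_{−L_T/2}^{L_T/2} (sin(Ω(η_T − η_T'))/(η_T − η_T')) α(η_T') dη_T' for all η_T (with the integrand interpreted as Ω·α(η_T') at η_T' = η_T). Hence the two integral operators have the same eigenvalues. -/
private lemma exp_int (c b : ℝ) (hc : c ≠ 0) :
    (∫ x in (-b)..b, Complex.exp (Complex.I * (c : ℂ) * (x : ℂ)))
      = ((2 * Real.sin (c * b) / c : ℝ) : ℂ) := by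
  have hc' : Complex.I * (c : ℂ) ≠ 0 := by
    simp [Complex.I_ne_zero, hc, Complex.ofReal_eq_zero]
  have h1 : (∫ x in (-b)..b, Complex.exp (Complex.I * (c : ℂ) * (x : ℂ)))
      = ∫ x in (-b)..b, Complex.exp ((Complex.I * (c : ℂ)) * (x : ℂ)) := by
    simp [mul_assoc]
  rw [h1, integral_exp_mul_complex hc', div_eq_iff hc']
  have e1 : Complex.I * (c:ℂ) * ((b:ℝ):ℂ) = ((c*b : ℝ):ℂ) * Complex.I := by push_cast; ring
  have e2 : Complex.I * (c:ℂ) * ((-b : ℝ):ℂ) = (-((c*b : ℝ):ℂ)) * Complex.I := by push_cast; ring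
  rw [e1, e2, Complex.exp_mul_I, Complex.exp_mul_I, Complex.cos_neg, Complex.sin_neg,
    ← Complex.ofReal_sin, ← Complex.ofReal_cos]
  have : ((2 * Real.sin (c * b) / c : ℝ) : ℂ) = 2 * ((Real.sin (c*b) : ℝ):ℂ) / (c:ℂ) := by
    push_cast; ring
  rw [this, div_mul_eq_mul_div, eq_div_iff (by simpa using hc : ((c:ℝ):ℂ) ≠ 0)]
  ring

/-- Proposition 2: with `ψ = F · α` for the unimodular focusing function `F`, the
source–field coupling eigenproblem with kernel `K` is equivalent to the sinc-kernel
(prolate spheroidal wave function) eigenproblem for `α`; hence the two integral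
operators have the same eigenvalues. -/
theorem coupling_eigenproblem_iff_sinc_eigenproblem (k r LT LR θ φ : ℝ)
    (hk : 0 < k) (hr : 0 < r) (hLT : 0 < LT) (hLR : 0 < LR)
    (hθ : θ ∈ Set.Ioo (-(Real.pi / 2)) (Real.pi / 2))
    (hφ : φ ∈ Set.Ioo (-(Real.pi / 2)) (Real.pi / 2))
    (hcos : Real.cos θ * Real.cos φ ≠ 0)
    (g : ℝ → ℝ → ℝ)
    (hg : ∀ ηT ηR, g ηT ηR = ηT * Real.sin θ - ηR * Real.sin φ +
      (ηT * Real.cos θ - ηR * Real.cos φ) ^ 2 / (2 * r))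
    (K : ℝ → ℝ → ℂ)
    (hK : ∀ ηT' ηT, K ηT' ηT =
      ∫ ηR in (-(LR / 2))..(LR / 2),
        Complex.exp (Complex.I * (k : ℂ) * ((g ηT ηR - g ηT' ηR : ℝ) : ℂ)))
    (F : ℝ → ℂ)
    (hF : ∀ η, F η = Complex.exp (Complex.I * (k : ℂ) *
      ((η * Real.sin θ + η ^ 2 * Real.cos θ ^ 2 / (2 * r) : ℝ) : ℂ)))
    (Ω : ℝ) (hΩ : Ω = k * LR * Real.cos θ * Real.cos φ / (2 * r))
    (Sfun : ℝ → ℝ → ℝ)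
    (hSfun : ∀ ηT ηT', Sfun ηT ηT' =
      if ηT' = ηT then Ω else Real.sin (Ω * (ηT - ηT')) / (ηT - ηT'))
    (α : ℝ → ℂ) (hα : IntervalIntegrable α MeasureTheory.volume (-(LT / 2)) (LT / 2))
    (v : ℂ) (ψ : ℝ → ℂ) (hψ : ∀ η, ψ η = F η * α η) :
    (∀ ηT, v * ψ ηT = ∫ ηT' in (-(LT / 2))..(LT / 2), K ηT' ηT * ψ ηT') ↔
    (∀ ηT, v * α ηT = ((2 * r / (k * Real.cos θ * Real.cos φ) : ℝ) : ℂ) *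
      ∫ ηT' in (-(LT / 2))..(LT / 2), ((Sfun ηT ηT' : ℝ) : ℂ) * α ηT') := by
  have hrne : r ≠ 0 := ne_of_gt hr
  have hkne : k ≠ 0 := ne_of_gt hk
  have hcθ : Real.cos θ ≠ 0 := fun h => hcos (by rw [h, zero_mul])
  have hcφ : Real.cos φ ≠ 0 := fun h => hcos (by rw [h, mul_zero])
  have hCne : k * Real.cos θ * Real.cos φ ≠ 0 := by
    exact mul_ne_zero (mul_ne_zero hkne hcθ) hcφ
  have hFne : ∀ η, F η ≠ 0 := by
    intro η; rw [hF]; exact Complex.exp_ne_zero _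
  -- the key kernel computation
  have hKeq : ∀ ηT' ηT, K ηT' ηT
      = F ηT * (F ηT')⁻¹
        * ((2 * r / (k * Real.cos θ * Real.cos φ) * Sfun ηT ηT' : ℝ) : ℂ) := by
    intro ηT' ηT
    set c : ℝ := -(k * Real.cos θ * Real.cos φ * (ηT - ηT') / r) with hc
    have hint : ∀ ηR : ℝ,
        Complex.exp (Complex.I * (k:ℂ) * ((g ηT ηR - g ηT' ηR : ℝ):ℂ))
          = F ηT * (F ηT')⁻¹ * Complex.exp (Complex.I * (c:ℂ) * (ηR:ℂ)) := by
      intro ηR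
      rw [hF, hF, ← Complex.exp_neg, ← Complex.exp_add, ← Complex.exp_add]
      congr 1
      have hre : k * (g ηT ηR - g ηT' ηR)
          = k * (ηT * Real.sin θ + ηT^2 * Real.cos θ^2 / (2*r))
            - k * (ηT' * Real.sin θ + ηT'^2 * Real.cos θ^2 / (2*r)) + c * ηR := by
        rw [hg, hg, hc]; field_simp; ring
      have hreC : ((k * (g ηT ηR - g ηT' ηR) : ℝ) : ℂ)
          = ((k * (ηT * Real.sin θ + ηT^2 * Real.cos θ^2 / (2*r))
            - k * (ηT' * Real.sin θ + ηT'^2 * Real.cos θ^2 / (2*r)) + c * ηR : ℝ) : ℂ) := by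
        exact_mod_cast congrArg Complex.ofReal hre
      push_cast at hreC ⊢
      linear_combination Complex.I * hreC
    rw [hK]
    simp only [hint, intervalIntegral.integral_const_mul]
    congr 1
    rcases eq_or_ne ηT' ηT with he | he
    · have hc0 : c = 0 := by rw [hc, he]; ring
      have : (∫ ηR in (-(LR / 2))..(LR / 2), Complex.exp (Complex.I * (c:ℂ) * (ηR:ℂ)))
          = ((LR : ℝ) : ℂ) := by
        simp [hc0]
      rw [this, hSfun, if_pos he, hΩ]
      have : 2 * r / (k * Real.cos θ * Real.cos φ)
          * (k * LR * Real.cos θ * Real.cos φ / (2 * r)) = LR := by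
        field_simp
      rw [this]
    · have hcne : c ≠ 0 := by
        rw [hc]
        have : ηT - ηT' ≠ 0 := sub_ne_zero_of_ne (Ne.symm he)
        simp only [neg_ne_zero, div_ne_zero_iff]
        exact ⟨mul_ne_zero hCne this, hrne⟩
      rw [exp_int c (LR/2) hcne, hSfun, if_neg he]
      congr 1
      have hsin : c * (LR / 2) = -(Ω * (ηT - ηT')) := by rw [hc, hΩ]; field_simp
      rw [hsin, Real.sin_neg]
      have hη : ηT - ηT' ≠ 0 := sub_ne_zero_of_ne (Ne.symm he)
      rw [hc]
      field_simp
  -- rewrite the integral on the LHS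
  have hInt : ∀ ηT, (∫ ηT' in (-(LT/2))..(LT/2), K ηT' ηT * ψ ηT')
      = F ηT * (((2 * r / (k * Real.cos θ * Real.cos φ) : ℝ):ℂ)
          * ∫ ηT' in (-(LT/2))..(LT/2), ((Sfun ηT ηT' : ℝ):ℂ) * α ηT') := by
    intro ηT
    have hpt : ∀ ηT', K ηT' ηT * ψ ηT'
        = (F ηT * ((2 * r / (k * Real.cos θ * Real.cos φ) : ℝ):ℂ))
            * (((Sfun ηT ηT' : ℝ):ℂ) * α ηT') := by
      intro ηT'
      rw [hKeq, hψ, Complex.ofReal_mul]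
      have h1 : (F ηT')⁻¹ * F ηT' = 1 := inv_mul_cancel₀ (hFne ηT')
      linear_combination (F ηT * ((2 * r / (k * Real.cos θ * Real.cos φ) : ℝ):ℂ)
        * ((Sfun ηT ηT' : ℝ):ℂ) * α ηT') * h1
    simp only [hpt]
    rw [intervalIntegral.integral_const_mul, mul_assoc]
  constructor
  · intro h ηT
    have h2 := h ηT
    rw [hψ, hInt] at h2
    exact mul_left_cancel₀ (hFne ηT) (by linear_combination h2)
  · intro h ηT
    rw [hψ, hInt]
    linear_combination (F ηT) * h ηT
end

section
/- Let a > 0 and define f : (0, ∞) → ℝ by f(x) = x · log₂(1 + a/x²). Then f attains a unique global maximum on (0, ∞), at the unique point x* > 0 satisfying (x*²/a + 1) · log₂(1 + a/x*²) = 2/ln 2 (equivalently, (x*²/a + 1) · ln(1 + a/x*²) = 2); moreover f is strictly increasing on (0, x*) and strictly decreasing on (x*, ∞). -/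
open Real Set

private lemma cap_pos_aux {a x : ℝ} (ha : 0 < a) (hx : 0 < x) : 0 < 1 + a / x ^ 2 := by
  positivity

private lemma cap_hasDerivAt_L {a : ℝ} (ha : 0 < a) {x : ℝ} (hx : 0 < x) :
    HasDerivAt (fun y : ℝ => Real.log (1 + a / y ^ 2))
      ((-(2 * a) / x ^ 3) / (1 + a / x ^ 2)) x := by
  have hx0 : x ≠ 0 := ne_of_gt hx
  have hx2 : x ^ 2 ≠ 0 := by positivity
  have h1 : HasDerivAt (fun y : ℝ => 1 + a / y ^ 2) (-(2 * a) / x ^ 3) x := by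
    have h : HasDerivAt (fun y : ℝ => 1 + a / y ^ 2) _ x := ((hasDerivAt_const x a).div (hasDerivAt_pow 2 x) hx2).const_add 1
    convert h using 1
    push_cast
    field_simp
    ring
  exact h1.log (ne_of_gt (cap_pos_aux ha hx))

private lemma cap_hasDerivAt_g {a : ℝ} (ha : 0 < a) {x : ℝ} (hx : 0 < x) :
    HasDerivAt (fun y : ℝ => (y ^ 2 / a + 1) * Real.log (1 + a / y ^ 2))
      ((2 * x / a) * Real.log (1 + a / x ^ 2) - 2 / x) x := by
  have hx0 : x ≠ 0 := ne_of_gt hx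
  have ha0 : a ≠ 0 := ne_of_gt ha
  have hu : (1 : ℝ) + a / x ^ 2 ≠ 0 := ne_of_gt (cap_pos_aux ha hx)
  have h1 : HasDerivAt (fun y : ℝ => y ^ 2 / a + 1) (2 * x / a) x := by
    have h : HasDerivAt (fun y : ℝ => y ^ 2 / a + 1) _ x := ((hasDerivAt_pow 2 x).div_const a).add_const 1
    convert h using 1
    push_cast
    ring
  have h : HasDerivAt (fun y : ℝ => (y ^ 2 / a + 1) * Real.log (1 + a / y ^ 2)) _ x := h1.mul (cap_hasDerivAt_L ha hx)
  convert h using 1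
  field_simp
  ring

private lemma cap_hasDerivAt_f {a : ℝ} (ha : 0 < a) {x : ℝ} (hx : 0 < x) :
    HasDerivAt (fun y : ℝ => y * Real.log (1 + a / y ^ 2) / Real.log 2)
      ((Real.log (1 + a / x ^ 2) - (2 * a / x ^ 2) / (1 + a / x ^ 2)) / Real.log 2) x := by
  have hx0 : x ≠ 0 := ne_of_gt hx
  have hu : (1 : ℝ) + a / x ^ 2 ≠ 0 := ne_of_gt (cap_pos_aux ha hx)
  have hl2 : Real.log 2 ≠ 0 := ne_of_gt (Real.log_pos (by norm_num))
  have h : HasDerivAt (fun y : ℝ => y * Real.log (1 + a / y ^ 2) / Real.log 2) _ x := ((hasDerivAt_id x).mul (cap_hasDerivAt_L ha hx)).div_const (Real.log 2)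
  convert h using 1
  simp only [id]
  field_simp
  ring

private lemma cap_log_lt {a x : ℝ} (ha : 0 < a) (hx : 0 < x) :
    Real.log (1 + a / x ^ 2) < a / x ^ 2 := by
  have hu : 0 < a / x ^ 2 := by positivity
  have h := Real.log_lt_sub_one_of_pos (by linarith : (0:ℝ) < 1 + a / x ^ 2)
    (by linarith : (1:ℝ) + a / x ^ 2 ≠ 1)
  linarith

private lemma cap_g_deriv_neg {a x : ℝ} (ha : 0 < a) (hx : 0 < x) :
    (2 * x / a) * Real.log (1 + a / x ^ 2) - 2 / x < 0 := by
  have hL := cap_log_lt ha hx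
  have hc : 0 < 2 * x / a := by positivity
  have key : (2 * x / a) * (a / x ^ 2) = 2 / x := by field_simp
  nlinarith [mul_lt_mul_of_pos_left hL hc]

private lemma cap_f_deriv_pos {a x : ℝ} (ha : 0 < a) (hx : 0 < x)
    (hg : 2 < (x ^ 2 / a + 1) * Real.log (1 + a / x ^ 2)) :
    0 < (Real.log (1 + a / x ^ 2) - (2 * a / x ^ 2) / (1 + a / x ^ 2)) / Real.log 2 := by
  have hu : 0 < a / x ^ 2 := by positivity
  have hup : 0 < 1 + a / x ^ 2 := by linarith
  have hl2 : 0 < Real.log 2 := Real.log_pos (by norm_num)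
  apply div_pos _ hl2
  rw [sub_pos, div_lt_iff₀ hup]
  have hid : (1 + a / x ^ 2) * Real.log (1 + a / x ^ 2)
      = a / x ^ 2 * ((x ^ 2 / a + 1) * Real.log (1 + a / x ^ 2)) := by
    field_simp
  have hmul := mul_lt_mul_of_pos_left hg (by positivity : (0:ℝ) < a / x ^ 2)
  rw [← hid] at hmul
  have : a / x ^ 2 * 2 = 2 * a / x ^ 2 := by ring
  linarith

private lemma cap_f_deriv_neg {a x : ℝ} (ha : 0 < a) (hx : 0 < x)
    (hg : (x ^ 2 / a + 1) * Real.log (1 + a / x ^ 2) < 2) :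
    (Real.log (1 + a / x ^ 2) - (2 * a / x ^ 2) / (1 + a / x ^ 2)) / Real.log 2 < 0 := by
  have hu : 0 < a / x ^ 2 := by positivity
  have hup : 0 < 1 + a / x ^ 2 := by linarith
  have hl2 : 0 < Real.log 2 := Real.log_pos (by norm_num)
  apply div_neg_of_neg_of_pos _ hl2
  rw [sub_neg, lt_div_iff₀ hup]
  have hid : (1 + a / x ^ 2) * Real.log (1 + a / x ^ 2)
      = a / x ^ 2 * ((x ^ 2 / a + 1) * Real.log (1 + a / x ^ 2)) := by
    field_simp
  have hmul := mul_lt_mul_of_pos_left hg (by positivity : (0:ℝ) < a / x ^ 2)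
  rw [← hid] at hmul
  have : a / x ^ 2 * 2 = 2 * a / x ^ 2 := by ring
  linarith

private lemma cap_g_big {a : ℝ} (ha : 0 < a) :
    2 < ((Real.sqrt a / Real.exp 1) ^ 2 / a + 1) *
      Real.log (1 + a / (Real.sqrt a / Real.exp 1) ^ 2) := by
  have ha0 : a ≠ 0 := ne_of_gt ha
  have he : (0:ℝ) < Real.exp 1 := Real.exp_pos 1
  have hx1sq : (Real.sqrt a / Real.exp 1) ^ 2 = a / Real.exp 1 ^ 2 := by
    rw [div_pow, Real.sq_sqrt ha.le]
  have hu : a / (Real.sqrt a / Real.exp 1) ^ 2 = Real.exp 1 ^ 2 := by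
    rw [hx1sq]; field_simp
  have ht : (Real.sqrt a / Real.exp 1) ^ 2 / a = 1 / Real.exp 1 ^ 2 := by
    rw [hx1sq]; field_simp
  rw [hu, ht]
  have hL : 2 < Real.log (1 + Real.exp 1 ^ 2) := by
    have h1 : Real.log (Real.exp 1 ^ 2) < Real.log (1 + Real.exp 1 ^ 2) :=
      Real.log_lt_log (by positivity) (by linarith)
    rw [Real.log_pow, Real.log_exp] at h1
    push_cast at h1
    linarith
  have hfac : (1:ℝ) < 1 / Real.exp 1 ^ 2 + 1 := by
    have : (0:ℝ) < 1 / Real.exp 1 ^ 2 := by positivity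
    linarith
  nlinarith [mul_pos (by linarith : (0:ℝ) < 1 / Real.exp 1 ^ 2 + 1 - 1) (by linarith : (0:ℝ) < Real.log (1 + Real.exp 1 ^ 2) - 2)]

private lemma cap_g_small {a : ℝ} (ha : 0 < a) :
    (Real.sqrt (2 * a) ^ 2 / a + 1) *
      Real.log (1 + a / Real.sqrt (2 * a) ^ 2) < 2 := by
  have ha0 : a ≠ 0 := ne_of_gt ha
  have hsq : Real.sqrt (2 * a) ^ 2 = 2 * a := Real.sq_sqrt (by linarith)
  rw [hsq]
  have h1 : (2 * a) / a = 2 := by field_simp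
  have h2 : a / (2 * a) = 1 / 2 := by field_simp
  rw [h1, h2]
  have hL : Real.log (1 + 1 / 2) < 1 / 2 := by
    have := Real.log_lt_sub_one_of_pos (by norm_num : (0:ℝ) < 1 + 1/2) (by norm_num)
    linarith
  have hLpos : 0 < Real.log (1 + 1/2 : ℝ) := Real.log_pos (by norm_num)
  nlinarith

/-- The function `f(x) = x log₂(1 + a/x²)` on `(0, ∞)` attains a unique global maximum at
the unique point `x* > 0` solving the transcendental equation
`(x*²/a + 1) log₂(1 + a/x*²) = 2/ln 2` (equivalently `(x*²/a + 1) ln(1 + a/x*²) = 2`);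
moreover `f` is strictly increasing on `(0, x*)` and strictly decreasing on `(x*, ∞)`. -/
theorem capacity_approx_unique_max (a : ℝ) (ha : 0 < a) (f : ℝ → ℝ)
    (hf : ∀ x, f x = x * Real.logb 2 (1 + a / x ^ 2)) :
    ∃ xs : ℝ, 0 < xs ∧
      (xs ^ 2 / a + 1) * Real.logb 2 (1 + a / xs ^ 2) = 2 / Real.log 2 ∧
      (xs ^ 2 / a + 1) * Real.log (1 + a / xs ^ 2) = 2 ∧
      (∀ y : ℝ, 0 < y → (y ^ 2 / a + 1) * Real.log (1 + a / y ^ 2) = 2 → y = xs) ∧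
      (∀ x : ℝ, 0 < x → x ≠ xs → f x < f xs) ∧
      StrictMonoOn f (Set.Ioo 0 xs) ∧
      StrictAntiOn f (Set.Ioi xs) := by
  set g : ℝ → ℝ := fun y => (y ^ 2 / a + 1) * Real.log (1 + a / y ^ 2) with hg_def
  have hfun : f = fun y : ℝ => y * Real.log (1 + a / y ^ 2) / Real.log 2 := by
    funext y
    rw [hf y, Real.logb, mul_div_assoc]
  -- g is strictly decreasing on (0, ∞)
  have hg_anti : StrictAntiOn g (Set.Ioi 0) := by
    apply strictAntiOn_of_deriv_neg (convex_Ioi 0)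
    · exact fun y hy => (cap_hasDerivAt_g ha hy).continuousAt.continuousWithinAt
    · intro y hy
      rw [interior_Ioi] at hy
      rw [(cap_hasDerivAt_g ha hy).deriv]
      exact cap_g_deriv_neg ha hy
  -- existence of xs via IVT
  set x₁ : ℝ := Real.sqrt a / Real.exp 1 with hx₁_def
  set x₂ : ℝ := Real.sqrt (2 * a) with hx₂_def
  have hx₁ : 0 < x₁ := div_pos (Real.sqrt_pos.2 ha) (Real.exp_pos 1)
  have hle : x₁ ≤ x₂ := by
    have h1 : (1:ℝ) ≤ Real.exp 1 := by
      have := Real.add_one_le_exp (1:ℝ); linarith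
    have h2 : x₁ ≤ Real.sqrt a := div_le_self (Real.sqrt_nonneg a) h1
    have h3 : Real.sqrt a ≤ Real.sqrt (2 * a) := Real.sqrt_le_sqrt (by linarith)
    linarith
  have hcg : ContinuousOn g (Set.Icc x₁ x₂) := fun y hy =>
    (cap_hasDerivAt_g ha (lt_of_lt_of_le hx₁ hy.1)).continuousAt.continuousWithinAt
  have hmem : (2:ℝ) ∈ Set.Icc (g x₂) (g x₁) :=
    ⟨le_of_lt (cap_g_small ha), le_of_lt (cap_g_big ha)⟩
  obtain ⟨xs, hxs_mem, hgxs⟩ := intermediate_value_Icc' hle hcg hmem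
  have hxs_pos : 0 < xs := lt_of_lt_of_le hx₁ hxs_mem.1
  -- derivative facts for f
  have hfd : ∀ y : ℝ, 0 < y → HasDerivAt f
      ((Real.log (1 + a / y ^ 2) - (2 * a / y ^ 2) / (1 + a / y ^ 2)) / Real.log 2) y := by
    intro y hy
    rw [hfun]
    exact cap_hasDerivAt_f ha hy
  -- strict mono on Ioc 0 xs
  have hmono : StrictMonoOn f (Set.Ioc 0 xs) := by
    apply strictMonoOn_of_deriv_pos (convex_Ioc 0 xs)
    · exact fun y hy => (hfd y hy.1).continuousAt.continuousWithinAt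
    · intro y hy
      rw [interior_Ioc] at hy
      rw [(hfd y hy.1).deriv]
      have hgy : 2 < g y := by
        rw [← hgxs]
        exact hg_anti (Set.mem_Ioi.2 hy.1) (Set.mem_Ioi.2 hxs_pos) hy.2
      exact cap_f_deriv_pos ha hy.1 hgy
  -- strict anti on Ici xs
  have hanti : StrictAntiOn f (Set.Ici xs) := by
    apply strictAntiOn_of_deriv_neg (convex_Ici xs)
    · exact fun y hy => (hfd y (lt_of_lt_of_le hxs_pos hy)).continuousAt.continuousWithinAt
    · intro y hy
      rw [interior_Ici] at hy
      have hy0 : 0 < y := lt_trans hxs_pos hy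
      rw [(hfd y hy0).deriv]
      have hgy : g y < 2 := by
        rw [← hgxs]
        exact hg_anti (Set.mem_Ioi.2 hxs_pos) (Set.mem_Ioi.2 hy0) hy
      exact cap_f_deriv_neg ha hy0 hgy
  refine ⟨xs, hxs_pos, ?_, hgxs, ?_, ?_, hmono.mono Set.Ioo_subset_Ioc_self,
    hanti.mono Set.Ioi_subset_Ici_self⟩
  · rw [Real.logb, ← mul_div_assoc]
    exact congrArg (fun t => t / Real.log 2) hgxs
  · intro y hy hy2
    exact hg_anti.injOn (Set.mem_Ioi.2 hy) (Set.mem_Ioi.2 hxs_pos) (hy2.trans hgxs.symm)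
  · intro x hx hne
    rcases lt_or_gt_of_ne hne with h | h
    · exact hmono ⟨hx, h.le⟩ ⟨hxs_pos, le_refl xs⟩ h
    · exact hanti (Set.mem_Ici.2 le_rfl) (Set.mem_Ici.2 h.le) h
end
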